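/- arXiv:1902.09748 — 4 statements merged into one kernel-verified Lean document; each statement's English description precedes it below -/
import Mathlib

section
/- Let f_1 > f_2 > ⋯ > f_r be all diagonal monomials of X, ordered decreasingly by τ (i.e., all monomials X_{1c_1}X_{2c_2}⋯X_{mc_m} with 1 ≤ c_1 < c_2 < ⋯ < c_m ≤ n). Fix 1 ≤ u ≤ r−1 and write f_{u+1} = X_{1c_1}X_{2c_2}⋯X_{mc_m}; set c_0 = 0. Then the colon ideal (⟨f_1,…,f_u⟩ : f_{u+1}) in K[X] equals the ideal generated by the variables X_{ib} with 1 ≤ i ≤ m and c_{i−1} < b < c_i. -/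
open MvPolynomial

/-- The exponent vector of the diagonal monomial with column sequence `c`
(rows `1,…,m`, row `i` contributing the variable `X (i, c i)`). -/
noncomputable def expVec (m : ℕ) (c : ℕ → ℕ) : (ℕ × ℕ) →₀ ℕ :=
  ∑ i ∈ Finset.Icc 1 m, Finsupp.single (i, c i) 1

/-- The diagonal monomial `X_{1 c₁} X_{2 c₂} ⋯ X_{m c_m}`. -/
noncomputable def diagMon (K : Type*) [Field K] (m : ℕ) (c : ℕ → ℕ) :
    MvPolynomial (ℕ × ℕ) K :=
  ∏ i ∈ Finset.Icc 1 m, MvPolynomial.X (i, c i)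

/-- `tauGt a b` : the monomial with exponent vector `a` is strictly larger than the one
with exponent vector `b` in the lexicographic monomial order τ induced by
`X 11 > X 12 > ⋯ > X 1n > X 21 > ⋯ > X mn` : at the most significant variable where
they differ (i.e. the lexicographically smallest index pair), `a` has the bigger exponent. -/
def tauGt (a b : (ℕ × ℕ) →₀ ℕ) : Prop :=
  ∃ p : ℕ × ℕ, b p < a p ∧
    ∀ q : ℕ × ℕ, (q.1 < p.1 ∨ (q.1 = p.1 ∧ q.2 < p.2)) → a q = b q

/-- `c` is the column sequence of a diagonal monomial of the submatrix `Y_{kl}`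
(columns `k` through `l`): strictly increasing on `1,…,m` with values in `[k,l]`. -/
def IsDiagSeq (m k l : ℕ) (c : ℕ → ℕ) : Prop :=
  (∀ i, 1 ≤ i → i < m → c i < c (i + 1)) ∧ k ≤ c 1 ∧ c m ≤ l

/-- The ideal `J_{kl}` of `K[X]` generated by all diagonal monomials of `Y_{kl}`. -/
noncomputable def Jkl (K : Type*) [Field K] (m k l : ℕ) : Ideal (MvPolynomial (ℕ × ℕ) K) :=
  Ideal.span {g | ∃ c, IsDiagSeq m k l c ∧ g = diagMon K m c}

lemma expVec_apply (m : ℕ) (c : ℕ → ℕ) (i q : ℕ) :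
    expVec m c (i, q) = if 1 ≤ i ∧ i ≤ m ∧ q = c i then 1 else 0 := by
  classical
  rw [expVec, Finset.sum_apply']
  simp only [Finsupp.single_apply]
  split_ifs with h
  · obtain ⟨h1, h2, h3⟩ := h
    rw [Finset.sum_eq_single i]
    · rw [if_pos (by rw [h3])]
    · intro j hj hji
      exact if_neg fun he => hji (congrArg Prod.fst he)
    · intro hi; exact absurd (Finset.mem_Icc.2 ⟨h1, h2⟩) hi
  · apply Finset.sum_eq_zero
    intro j hj
    apply if_neg
    intro he
    rw [Prod.mk.injEq] at he
    obtain ⟨rfl, rfl⟩ := he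
    exact h ⟨(Finset.mem_Icc.1 hj).1, (Finset.mem_Icc.1 hj).2, rfl⟩

lemma prod_X_eq_monomial {K : Type*} [Field K] (s : Finset ℕ) (f : ℕ → ℕ × ℕ) :
    (∏ i ∈ s, (X (f i) : MvPolynomial (ℕ × ℕ) K)) =
      monomial (∑ i ∈ s, Finsupp.single (f i) 1) 1 := by
  classical
  induction s using Finset.cons_induction with
  | empty => simp
  | cons a s ha ih =>
      rw [Finset.prod_cons, Finset.sum_cons, ih, X, monomial_mul, one_mul]

lemma diagMon_eq (K : Type*) [Field K] (m : ℕ) (c : ℕ → ℕ) :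
    diagMon K m c = monomial (expVec m c) 1 := by
  rw [diagMon, expVec]; exact prod_X_eq_monomial _ _

lemma diag_strict {m k l : ℕ} {a : ℕ → ℕ} (ha : IsDiagSeq m k l a) :
    ∀ i j, 1 ≤ i → i < j → j ≤ m → a i < a j := by
  intro i j h1
  induction j with
  | zero => intro h _; omega
  | succ j ih =>
    intro hij hjm
    rcases Nat.lt_or_ge i j with h | h
    · exact lt_trans (ih h (by omega)) (ha.1 j (by omega) (by omega))
    · have : i = j := by omega
      subst this
      exact ha.1 i h1 (by omega)

lemma diag_mono {m k l : ℕ} {a : ℕ → ℕ} (ha : IsDiagSeq m k l a) :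
    ∀ i j, 1 ≤ i → i ≤ j → j ≤ m → a i ≤ a j := by
  intro i j h1 hij hjm
  rcases Nat.eq_or_lt_of_le hij with rfl | h
  · exact le_rfl
  · exact le_of_lt (diag_strict ha i j h1 h hjm)

lemma core {m n : ℕ} {c a : ℕ → ℕ}
    (hc0 : c 0 = 0) (hc : IsDiagSeq m 1 n c) (ha : IsDiagSeq m 1 n a)
    (ht : tauGt (expVec m a) (expVec m c)) (μ : (ℕ × ℕ) →₀ ℕ)
    (hle : expVec m a ≤ μ + expVec m c) :
    ∃ i b, 1 ≤ i ∧ i ≤ m ∧ c (i - 1) < b ∧ b < c i ∧ μ (i, b) ≠ 0 := by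
  obtain ⟨⟨i, q⟩, hp, hagree⟩ := ht
  rw [expVec_apply, expVec_apply] at hp
  have hcond : 1 ≤ i ∧ i ≤ m ∧ q = a i := by
    by_contra h; rw [if_neg h] at hp; omega
  obtain ⟨h1i, him, rfl⟩ := hcond
  have hne : a i ≠ c i := by
    intro h; rw [h] at hp; exact lt_irrefl _ hp
  have hA : ∀ j, 1 ≤ j → j < i → a j = c j := by
    intro j hj1 hji
    have h2 := hagree (j, a j) (Or.inl hji)
    rw [expVec_apply, expVec_apply, if_pos ⟨hj1, by omega, rfl⟩] at h2
    by_contra h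
    rw [if_neg (fun hh => h hh.2.2)] at h2
    omega
  have hB : a i < c i := by
    rcases lt_trichotomy (a i) (c i) with h | h | h
    · exact h
    · exact absurd h hne
    · have h2 := hagree (i, c i) (Or.inr ⟨rfl, h⟩)
      rw [expVec_apply, expVec_apply] at h2
      have hneg : ¬(1 ≤ i ∧ i ≤ m ∧ c i = a i) := fun hh => hne hh.2.2.symm
      rw [if_neg hneg, if_pos ⟨h1i, him, rfl⟩] at h2
      omega
  have h1b : 1 ≤ a i := le_trans ha.2.1 (diag_mono ha 1 i le_rfl h1i him)
  have hlow : c (i - 1) < a i := by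
    rcases Nat.eq_or_lt_of_le h1i with h | h
    · have hi0 : i - 1 = 0 := by omega
      rw [hi0, hc0]; omega
    · have he : a (i - 1) = c (i - 1) := hA (i - 1) (by omega) (by omega)
      rw [← he]
      exact diag_strict ha (i - 1) i (by omega) (by omega) him
  refine ⟨i, a i, h1i, him, hlow, hB, ?_⟩
  have h2 := Finsupp.le_def.1 hle (i, a i)
  rw [Finsupp.add_apply, expVec_apply, expVec_apply, if_pos ⟨h1i, him, rfl⟩,
    if_neg (fun hh => hne hh.2.2)] at h2
  omega

lemma tau_update (m : ℕ) (c : ℕ → ℕ) (i b : ℕ) (h1 : 1 ≤ i) (him : i ≤ m) (hb : b < c i) :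
    tauGt (expVec m (Function.update c i b)) (expVec m c) := by
  refine ⟨(i, b), ?_, ?_⟩
  · rw [expVec_apply, expVec_apply]
    have hneg : ¬(1 ≤ i ∧ i ≤ m ∧ b = c i) := fun hh => absurd hh.2.2 (Nat.ne_of_lt hb)
    have hpos : 1 ≤ i ∧ i ≤ m ∧ b = Function.update c i b i :=
      ⟨h1, him, (Function.update_self i b c).symm⟩
    rw [if_neg hneg, if_pos hpos]
    omega
  · rintro ⟨j, q⟩ (hj | ⟨hj, hq⟩)
    · simp only at hj
      rw [expVec_apply, expVec_apply, Function.update_of_ne (by omega)]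
    · simp only at hj hq
      rw [hj]
      rw [expVec_apply, expVec_apply, Function.update_self]
      have hn1 : ¬(1 ≤ i ∧ i ≤ m ∧ q = b) := fun hh => absurd hh.2.2 (Nat.ne_of_lt hq)
      have hn2 : ¬(1 ≤ i ∧ i ≤ m ∧ q = c i) :=
        fun hh => absurd hh.2.2 (Nat.ne_of_lt (lt_trans hq hb))
      rw [if_neg hn1, if_neg hn2]

lemma update_diag {m n : ℕ} {c : ℕ → ℕ} (hc : IsDiagSeq m 1 n c) (hc0 : c 0 = 0)
    {i b : ℕ} (h1 : 1 ≤ i) (him : i ≤ m) (hlb : c (i - 1) < b) (hub : b < c i) :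
    IsDiagSeq m 1 n (Function.update c i b) := by
  refine ⟨?_, ?_, ?_⟩
  · intro j hj1 hjm
    by_cases hji : j = i
    · subst hji
      rw [Function.update_self, Function.update_of_ne (by omega)]
      exact lt_trans hub (hc.1 j hj1 hjm)
    · by_cases hji' : j + 1 = i
      · rw [Function.update_of_ne hji, hji', Function.update_self]
        have hj : j = i - 1 := by omega
        rw [hj]; exact hlb
      · rw [Function.update_of_ne hji, Function.update_of_ne hji']
        exact hc.1 j hj1 hjm
  · rcases eq_or_ne i 1 with h | h
    · subst h
      rw [Function.update_self]
      have h0 : c (1 - 1) = c 0 := rfl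
      omega
    · rw [Function.update_of_ne (Ne.symm h)]; exact hc.2.1
  · rcases eq_or_ne m i with h | h
    · subst h
      rw [Function.update_self]
      have h2 := hc.2.2
      omega
    · rw [Function.update_of_ne h]; exact hc.2.2

/-- Let `f₁ > ⋯ > f_r` be all diagonal monomials of `X` ordered decreasingly
by τ, fix `1 ≤ u ≤ r - 1` and write `f_{u+1} = X_{1c₁}⋯X_{mc_m}`, `c₀ = 0`.  Then
`(⟨f₁,…,f_u⟩ : f_{u+1})` equals the ideal generated by the variables `X_{ib}` with
`1 ≤ i ≤ m` and `c_{i-1} < b < c_i`.  The ideal `⟨f₁,…,f_u⟩` is the ideal generated by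
all diagonal monomials of `X` that are τ-greater than `f_{u+1}`, and the condition
`1 ≤ u` says that at least one such monomial exists. -/
theorem stmt_0 (K : Type*) [Field K] (m n : ℕ) (hm : 1 ≤ m) (hmn : m ≤ n)
    (c : ℕ → ℕ) (hc0 : c 0 = 0) (hc : IsDiagSeq m 1 n c)
    (hu : ∃ a, IsDiagSeq m 1 n a ∧ tauGt (expVec m a) (expVec m c)) :
    Submodule.colon
      (Ideal.span {g : MvPolynomial (ℕ × ℕ) K |
        ∃ a, IsDiagSeq m 1 n a ∧ tauGt (expVec m a) (expVec m c) ∧ g = diagMon K m a})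
      (Ideal.span {diagMon K m c}) =
    Ideal.span {P : MvPolynomial (ℕ × ℕ) K |
        ∃ i b : ℕ, 1 ≤ i ∧ i ≤ m ∧ c (i - 1) < b ∧ b < c i ∧ P = MvPolynomial.X (i, b)} := by
    classical
  apply le_antisymm
  · intro g hg
    rw [Ideal.mem_colon_span_singleton] at hg
    have hset : {g : MvPolynomial (ℕ × ℕ) K |
        ∃ a, IsDiagSeq m 1 n a ∧ tauGt (expVec m a) (expVec m c) ∧ g = diagMon K m a} =
        (fun s => monomial s (1 : K)) ''
          {s | ∃ a, IsDiagSeq m 1 n a ∧ tauGt (expVec m a) (expVec m c) ∧ s = expVec m a} := by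
      ext P
      constructor
      · rintro ⟨a, ha1, ha2, rfl⟩
        exact ⟨expVec m a, ⟨a, ha1, ha2, rfl⟩, (diagMon_eq K m a).symm⟩
      · rintro ⟨s, ⟨a, ha1, ha2, rfl⟩, rfl⟩
        exact ⟨a, ha1, ha2, (diagMon_eq K m a).symm⟩
    rw [hset, mem_ideal_span_monomial_image] at hg
    have hX : {P : MvPolynomial (ℕ × ℕ) K |
        ∃ i b : ℕ, 1 ≤ i ∧ i ≤ m ∧ c (i - 1) < b ∧ b < c i ∧ P = MvPolynomial.X (i, b)} =
        MvPolynomial.X ''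
          {p : ℕ × ℕ | 1 ≤ p.1 ∧ p.1 ≤ m ∧ c (p.1 - 1) < p.2 ∧ p.2 < c p.1} := by
      ext P
      constructor
      · rintro ⟨i, b, h1, h2, h3, h4, rfl⟩
        exact ⟨(i, b), ⟨h1, h2, h3, h4⟩, rfl⟩
      · rintro ⟨⟨i, b⟩, ⟨h1, h2, h3, h4⟩, rfl⟩
        exact ⟨i, b, h1, h2, h3, h4, rfl⟩
    rw [hX, mem_ideal_span_X_image]
    intro μ hμ
    have hsup : μ + expVec m c ∈ (g * diagMon K m c).support := by
      rw [mem_support_iff, diagMon_eq, coeff_mul_monomial, mul_one]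
      exact mem_support_iff.1 hμ
    obtain ⟨s, ⟨a, hda, hta, rfl⟩, hs⟩ := hg _ hsup
    obtain ⟨i, b, h1, h2, h3, h4, h5⟩ := core hc0 hc hda hta μ hs
    exact ⟨(i, b), ⟨h1, h2, h3, h4⟩, h5⟩
  · rw [Ideal.span_le]
    rintro P ⟨i, b, h1, him, hlb, hub, rfl⟩
    rw [SetLike.mem_coe, Ideal.mem_colon_span_singleton]
    have hdiag := update_diag hc hc0 h1 him hlb hub
    have htau := tau_update m c i b h1 him hub
    have hi : i ∈ Finset.Icc 1 m := Finset.mem_Icc.2 ⟨h1, him⟩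
    have hprod : ∏ j ∈ (Finset.Icc 1 m).erase i,
        (X (j, Function.update c i b j) : MvPolynomial (ℕ × ℕ) K) =
        ∏ j ∈ (Finset.Icc 1 m).erase i, X (j, c j) :=
      Finset.prod_congr rfl fun j hj => by
        rw [Function.update_of_ne (Finset.ne_of_mem_erase hj)]
    have key : X (i, b) * diagMon K m c
        = X (i, c i) * diagMon K m (Function.update c i b) := by
      rw [diagMon, diagMon, ← Finset.mul_prod_erase _ _ hi,
        ← Finset.mul_prod_erase _ (fun j => (X (j, Function.update c i b j) :
            MvPolynomial (ℕ × ℕ) K)) hi,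
        Function.update_self, hprod]
      ring
    rw [key]
    exact Ideal.mul_mem_left _ _ (Ideal.subset_span ⟨_, hdiag, htau, rfl⟩)
end

section
/- Let s ≥ 1 and let 1 ≤ k_1 ≤ k_2 ≤ ⋯ ≤ k_s < n and 1 < l_1 ≤ l_2 ≤ ⋯ ≤ l_s ≤ n satisfy k_j < l_j and l_j − k_j + 1 ≥ m for all j. For each j ∈ {1,…,s} let g_j be a diagonal monomial of Y_{k_j l_j}, with column sequence c^{(j)}_1 < ⋯ < c^{(j)}_m. For each i and j let h^{(j)}_i be the j-th smallest element, counted with multiplicity, of the multiset {c^{(1)}_i, …, c^{(s)}_i}, and set h_j = X_{1h^{(j)}_1}X_{2h^{(j)}_2}⋯X_{mh^{(j)}_m}. Then each h_j is a diagonal monomial of Y_{k_j l_j}, and g_1 g_2 ⋯ g_s = h_1 h_2 ⋯ h_s in K[X]. -/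
-- monotone from adjacent
lemma adjMono (s : ℕ) (f : ℕ → ℕ) (hf : ∀ j, 1 ≤ j → j < s → f j ≤ f (j+1)) :
    ∀ a b, 1 ≤ a → a ≤ b → b ≤ s → f a ≤ f b := by
  intro a b ha hab hbs
  induction b with
  | zero => omega
  | succ b ih =>
    rcases Nat.eq_or_lt_of_le hab with rfl | hlt
    · exact le_refl _
    · exact le_trans (ih (by omega) (by omega)) (hf b (by omega) (by omega))

lemma count_eq (s : ℕ) (f g : ℕ → ℕ)
    (hfg : (Finset.Icc 1 s).val.map f = (Finset.Icc 1 s).val.map g)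
    (p : ℕ → Prop) [DecidablePred p] :
    ((Finset.Icc 1 s).filter (fun t => p (f t))).card
      = ((Finset.Icc 1 s).filter (fun t => p (g t))).card := by
  have := congrArg (Multiset.countP p) hfg
  simpa [Multiset.countP_map, Finset.card_filter, Finset.filter] using this

lemma key_iff (s : ℕ) (f : ℕ → ℕ) (hf : ∀ j, 1 ≤ j → j < s → f j ≤ f (j+1))
    (p : ℕ → Prop) [DecidablePred p] (hp : ∀ a b, a ≤ b → p b → p a)
    (j : ℕ) (hj1 : 1 ≤ j) (hjs : j ≤ s) :
    p (f j) ↔ j ≤ ((Finset.Icc 1 s).filter (fun t => p (f t))).card := by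
  have fmono := adjMono s f hf
  constructor
  · intro hpj
    have hsub : Finset.Icc 1 j ⊆ (Finset.Icc 1 s).filter (fun t => p (f t)) := by
      intro t ht
      rw [Finset.mem_Icc] at ht
      rw [Finset.mem_filter, Finset.mem_Icc]
      exact ⟨⟨ht.1, le_trans ht.2 hjs⟩, hp _ _ (fmono t j ht.1 ht.2 hjs) hpj⟩
    have := Finset.card_le_card hsub
    simpa using this
  · intro hcard
    have hex : ∃ t ∈ (Finset.Icc 1 s).filter (fun t => p (f t)), j ≤ t := by
      by_contra hno
      push_neg at hno
      have hsub : (Finset.Icc 1 s).filter (fun t => p (f t)) ⊆ Finset.Icc 1 (j-1) := by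
        intro t ht
        have h1 := (Finset.mem_filter.mp ht).1
        rw [Finset.mem_Icc] at h1 ⊢
        have := hno t ht
        omega
      have := Finset.card_le_card hsub
      rw [Nat.card_Icc] at this
      omega
    obtain ⟨t, ht, hjt⟩ := hex
    rw [Finset.mem_filter, Finset.mem_Icc] at ht
    exact hp _ _ (fmono j t hj1 hjt ht.1.2) ht.2



open MvPolynomial

/-- Let `1 ≤ k₁ ≤ ⋯ ≤ k_s < n`, `1 < l₁ ≤ ⋯ ≤ l_s ≤ n` with `k_j < l_j`
and `l_j - k_j + 1 ≥ m`.  Let `g_j` be a diagonal monomial of `Y_{k_j l_j}` with column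
sequence `c⁽ʲ⁾`, let `h⁽ʲ⁾ᵢ` be the `j`-th smallest element, with multiplicity, of the
multiset `{c⁽¹⁾ᵢ, …, c⁽ˢ⁾ᵢ}` (encoded as: for each `i`, `j ↦ h j i` is weakly
increasing on `1,…,s` and the multisets coincide), and set
`h_j = X_{1h⁽ʲ⁾₁}⋯X_{mh⁽ʲ⁾ₘ}`.  Then each `h_j` is a diagonal monomial of
`Y_{k_j l_j}` and `g₁⋯g_s = h₁⋯h_s` in `K[X]`. -/
theorem stmt_7 (K : Type*) [Field K] (s m n : ℕ) (hs : 1 ≤ s) (hm : 1 ≤ m) (hmn : m ≤ n)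
    (k l : ℕ → ℕ)
    (hk1 : 1 ≤ k 1) (hkmono : ∀ j, 1 ≤ j → j < s → k j ≤ k (j + 1)) (hks : k s < n)
    (hl1 : 1 < l 1) (hlmono : ∀ j, 1 ≤ j → j < s → l j ≤ l (j + 1)) (hls : l s ≤ n)
    (hkl : ∀ j, 1 ≤ j → j ≤ s → k j < l j)
    (hlen : ∀ j, 1 ≤ j → j ≤ s → m ≤ l j - k j + 1)
    (c h : ℕ → ℕ → ℕ)
    (hc : ∀ j, 1 ≤ j → j ≤ s → IsDiagSeq m (k j) (l j) (c j))
    (hmono : ∀ i, 1 ≤ i → i ≤ m → ∀ j, 1 ≤ j → j < s → h j i ≤ h (j + 1) i)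
    (hmult : ∀ i, 1 ≤ i → i ≤ m →
      (Finset.Icc 1 s).val.map (fun j => h j i) = (Finset.Icc 1 s).val.map (fun j => c j i)) :
    (∀ j, 1 ≤ j → j ≤ s → IsDiagSeq m (k j) (l j) (h j)) ∧
    (∏ j ∈ Finset.Icc 1 s, diagMon K m (c j)) = ∏ j ∈ Finset.Icc 1 s, diagMon K m (h j) := by
  have hkm := adjMono s k hkmono
  have hlm := adjMono s l hlmono
  have hgoal1 : ∀ j, 1 ≤ j → j ≤ s → IsDiagSeq m (k j) (l j) (h j) := by
    intro j hj1 hjs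
    refine ⟨?_, ?_, ?_⟩
    · -- strict increase in i
      intro i hi1 him
      have hkey1 := key_iff s (fun t => h t (i+1))
        (fun t h1 h2 => hmono (i+1) (by omega) (by omega) t h1 h2)
        (fun x => x ≤ h j (i+1)) (fun a b hab hb => le_trans hab hb) j hj1 hjs
      have hcnt1 := count_eq s (fun t => h t (i+1)) (fun t => c t (i+1))
        (hmult (i+1) (by omega) (by omega)) (fun x => x ≤ h j (i+1))
      have h1 : j ≤ ((Finset.Icc 1 s).filter (fun t => c t (i+1) ≤ h j (i+1))).card := by
        rw [← hcnt1]; exact hkey1.mp le_rfl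
      have hsub : (Finset.Icc 1 s).filter (fun t => c t (i+1) ≤ h j (i+1)) ⊆
          (Finset.Icc 1 s).filter (fun t => c t i < h j (i+1)) := by
        intro t ht
        rw [Finset.mem_filter, Finset.mem_Icc] at ht ⊢
        have hci := (hc t ht.1.1 ht.1.2).1 i hi1 him
        exact ⟨ht.1, lt_of_lt_of_le hci ht.2⟩
      have h2 : j ≤ ((Finset.Icc 1 s).filter (fun t => c t i < h j (i+1))).card :=
        le_trans h1 (Finset.card_le_card hsub)
      have hcnt2 := count_eq s (fun t => h t i) (fun t => c t i)
        (hmult i hi1 (by omega)) (fun x => x < h j (i+1))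
      have hkey2 := key_iff s (fun t => h t i)
        (fun t h1 h2 => hmono i hi1 (by omega) t h1 h2)
        (fun x => x < h j (i+1)) (fun a b hab hb => lt_of_le_of_lt hab hb) j hj1 hjs
      exact hkey2.mpr (by rw [hcnt2]; exact h2)
    · -- k j ≤ h j 1
      by_contra hlt
      push_neg at hlt
      have hkey := key_iff s (fun t => h t 1)
        (fun t h1 h2 => hmono 1 le_rfl hm t h1 h2)
        (fun x => x < k j) (fun a b hab hb => lt_of_le_of_lt hab hb) j hj1 hjs
      have hcnt := count_eq s (fun t => h t 1) (fun t => c t 1)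
        (hmult 1 le_rfl hm) (fun x => x < k j)
      have h1 : j ≤ ((Finset.Icc 1 s).filter (fun t => c t 1 < k j)).card := by
        rw [← hcnt]; exact hkey.mp hlt
      have hsub : (Finset.Icc 1 s).filter (fun t => c t 1 < k j) ⊆ Finset.Icc 1 (j-1) := by
        intro t ht
        rw [Finset.mem_filter, Finset.mem_Icc] at ht
        rw [Finset.mem_Icc]
        have hkt := (hc t ht.1.1 ht.1.2).2.1
        by_contra hcon
        have : j ≤ t := by omega
        have := hkm j t hj1 this ht.1.2
        omega
      have := Finset.card_le_card hsub
      rw [Nat.card_Icc] at this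
      omega
    · -- h j m ≤ l j
      have hkey := key_iff s (fun t => h t m)
        (fun t h1 h2 => hmono m hm le_rfl t h1 h2)
        (fun x => x ≤ l j) (fun a b hab hb => le_trans hab hb) j hj1 hjs
      have hcnt := count_eq s (fun t => h t m) (fun t => c t m)
        (hmult m hm le_rfl) (fun x => x ≤ l j)
      refine hkey.mpr ?_
      rw [hcnt]
      have hsub : Finset.Icc 1 j ⊆ (Finset.Icc 1 s).filter (fun t => c t m ≤ l j) := by
        intro t ht
        rw [Finset.mem_Icc] at ht
        have hts : t ≤ s := le_trans ht.2 hjs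
        rw [Finset.mem_filter, Finset.mem_Icc]
        exact ⟨⟨ht.1, hts⟩, le_trans ((hc t ht.1 hts).2.2) (hlm t j ht.1 ht.2 hjs)⟩
      have := Finset.card_le_card hsub
      simpa using this
  refine ⟨hgoal1, ?_⟩
  simp only [diagMon]
  have hcomm : ∀ cc : ℕ → ℕ → ℕ,
      (∏ j ∈ Finset.Icc 1 s, ∏ i ∈ Finset.Icc 1 m, (MvPolynomial.X (i, cc j i) : MvPolynomial (ℕ × ℕ) K))
        = ∏ i ∈ Finset.Icc 1 m, ∏ j ∈ Finset.Icc 1 s, MvPolynomial.X (i, cc j i) :=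
    fun cc => Finset.prod_comm
  rw [hcomm c, hcomm h]
  apply Finset.prod_congr rfl
  intro i hi
  rw [Finset.mem_Icc] at hi
  rw [Finset.prod_eq_multiset_prod, Finset.prod_eq_multiset_prod]
  congr 1
  calc (Finset.Icc 1 s).val.map (fun j => (MvPolynomial.X (i, c j i) : MvPolynomial (ℕ × ℕ) K))
      = ((Finset.Icc 1 s).val.map (fun j => c j i)).map
          (fun v => (MvPolynomial.X (i, v) : MvPolynomial (ℕ × ℕ) K)) := by
        rw [Multiset.map_map]; rfl
    _ = ((Finset.Icc 1 s).val.map (fun j => h j i)).map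
          (fun v => (MvPolynomial.X (i, v) : MvPolynomial (ℕ × ℕ) K)) := by
        rw [hmult i hi.1 hi.2]
    _ = (Finset.Icc 1 s).val.map (fun j => MvPolynomial.X (i, h j i)) := by
        rw [Multiset.map_map]; rfl
end

section
/- Let X be a 3 × 9 matrix of distinct indeterminates over a field K. Then the colon ideal (J_{37}·J_{15} : X_{13}X_{24}X_{35}) in K[X] is not equal to J_{15}. (Here the order of the two factors violates the monotonicity hypothesis k_1 ≤ k_2, l_1 ≤ l_2 of Lemma 2.4, showing that hypothesis cannot be dropped.) -/
open MvPolynomial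

lemma diagMon3 (K : Type*) [Field K] (c : ℕ → ℕ) :
    diagMon K 3 c = X (1, c 1) * X (2, c 2) * X (3, c 3) := by
  have : Finset.Icc 1 3 = {1, 2, 3} := rfl
  rw [diagMon, this]
  simp [Finset.prod_insert, mul_assoc]

/-- For a `3 × 9` matrix of indeterminates, the colon ideal
`(J_{37}·J_{15} : X₁₃X₂₄X₃₅)` is not equal to `J_{15}`.  (The order of the two factors
violates the monotonicity hypothesis `k₁ ≤ k₂`, `l₁ ≤ l₂` of Lemma 2.4.) -/
theorem stmt_12 (K : Type*) [Field K] :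
    Submodule.colon (Jkl K 3 3 7 * Jkl K 3 1 5)
        (Ideal.span {(MvPolynomial.X (1, 3) * MvPolynomial.X (2, 4) * MvPolynomial.X (3, 5) :
          MvPolynomial (ℕ × ℕ) K)}) ≠
      Jkl K 3 1 5 := by
  intro h
  set g : MvPolynomial (ℕ × ℕ) K := X (1, 5) * X (2, 6) * X (3, 7) with hgdef
  have hg_colon : g ∈ Submodule.colon (Jkl K 3 3 7 * Jkl K 3 1 5)
      (Ideal.span {(X (1, 3) * X (2, 4) * X (3, 5) : MvPolynomial (ℕ × ℕ) K)}) := by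
    rw [Ideal.mem_colon_span_singleton]
    have h37 : g ∈ Jkl K 3 3 7 := by
      apply Ideal.subset_span
      exact ⟨fun i => i + 4, ⟨fun i _ _ => by simp, by norm_num, by norm_num⟩,
        by rw [diagMon3]⟩
    have h15 : (X (1, 3) * X (2, 4) * X (3, 5) : MvPolynomial (ℕ × ℕ) K) ∈ Jkl K 3 1 5 := by
      apply Ideal.subset_span
      exact ⟨fun i => i + 2, ⟨fun i _ _ => by simp, by norm_num, by norm_num⟩,
        by rw [diagMon3]⟩
    exact Ideal.mul_mem_mul h37 h15
  rw [h] at hg_colon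
  -- now derive contradiction: g ∉ Jkl K 3 1 5
  classical
  set φ : ℕ × ℕ → K := fun p => if p.1 = 2 ∧ p.2 ≤ 5 then 0 else 1 with hφ
  have hker : Jkl K 3 1 5 ≤ RingHom.ker (eval φ) := by
    rw [Jkl, Ideal.span_le]
    rintro x ⟨c, hc, rfl⟩
    have hc2 : c 2 ≤ 5 := by
      have h1 : c 2 < c 3 := hc.1 2 (by norm_num) (by norm_num)
      have h2 := hc.2.2
      omega
    rw [SetLike.mem_coe, RingHom.mem_ker, diagMon3]
    simp only [map_mul, eval_X]
    have : φ (2, c 2) = 0 := by simp [hφ, hc2]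
    rw [this]; ring
  have h0 : eval φ g = 0 := hker hg_colon
  rw [hgdef] at h0
  simp only [map_mul, eval_X, hφ] at h0
  norm_num at h0
end

section
/- Let X be a 3 × 9 matrix of distinct indeterminates over a field K. Let f_1, …, f_u be all diagonal monomials of Y_{28} that are strictly greater than X_{14}X_{26}X_{37} with respect to τ. Then the colon ideal (⟨J_{28}·J_{37}, f_1, …, f_u⟩ : X_{14}X_{26}X_{37}) is not equal to J_{37} + ⟨X_{12}, X_{13}, X_{25}⟩. (Here l_1 = 8 > 7 = l_2 violates the monotonicity hypothesis l_1 ≤ l_2 of Lemma 2.4, showing that hypothesis cannot be omitted.) -/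
open MvPolynomial

/-- The column sequence `(4, 6, 7)` of the diagonal monomial `X₁₄X₂₆X₃₇` of `Y₂₈`. -/
def c467 : ℕ → ℕ := fun i => if i = 1 then 4 else if i = 2 then 6 else if i = 3 then 7 else 0


def c468 : ℕ → ℕ := fun i => if i = 1 then 4 else if i = 2 then 6 else if i = 3 then 8 else 0

/-- For a `3 × 9` matrix of indeterminates, let `f₁, …, f_u` be all
diagonal monomials of `Y₂₈` that are τ-greater than `X₁₄X₂₆X₃₇`.  Then
`(⟨J₂₈·J₃₇, f₁, …, f_u⟩ : X₁₄X₂₆X₃₇) ≠ J₃₇ + ⟨X₁₂, X₁₃, X₂₅⟩`.  (Here `l₁ = 8 > 7 = l₂`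
violates the monotonicity hypothesis `l₁ ≤ l₂` of Lemma 2.4.) -/
theorem stmt_13 (K : Type*) [Field K] :
    Submodule.colon
        (Jkl K 3 2 8 * Jkl K 3 3 7 ⊔
          Ideal.span {g : MvPolynomial (ℕ × ℕ) K |
            ∃ a, IsDiagSeq 3 2 8 a ∧ tauGt (expVec 3 a) (expVec 3 c467) ∧ g = diagMon K 3 a})
        (Ideal.span {diagMon K 3 c467}) ≠
      Jkl K 3 3 7 ⊔
        Ideal.span {(MvPolynomial.X (1, 2) : MvPolynomial (ℕ × ℕ) K),
          MvPolynomial.X (1, 3), MvPolynomial.X (2, 5)} := by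
  intro h
  set g : MvPolynomial (ℕ × ℕ) K := X (1, 4) * X (2, 6) * X (3, 8) with hg
  -- g is in the colon
  have hgcolon : g ∈ Submodule.colon
        (Jkl K 3 2 8 * Jkl K 3 3 7 ⊔
          Ideal.span {g : MvPolynomial (ℕ × ℕ) K |
            ∃ a, IsDiagSeq 3 2 8 a ∧ tauGt (expVec 3 a) (expVec 3 c467) ∧ g = diagMon K 3 a})
        (Ideal.span {diagMon K 3 c467}) := by
    rw [Ideal.mem_colon_span_singleton]
    apply Ideal.mem_sup_left
    have : g * diagMon K 3 c467 = diagMon K 3 c468 * diagMon K 3 c467 := by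
      rw [diagMon3, diagMon3]
      show _ = X (1,4) * X (2,6) * X (3,8) * _
      ring
    rw [this]
    apply Ideal.mul_mem_mul
    · exact Ideal.subset_span ⟨c468, ⟨by intro i h1 h2; interval_cases i <;> norm_num [c468],
        by norm_num [c468], by norm_num [c468]⟩, rfl⟩
    · exact Ideal.subset_span ⟨c467, ⟨by intro i h1 h2; interval_cases i <;> norm_num [c467],
        by norm_num [c467], by norm_num [c467]⟩, rfl⟩
  rw [h] at hgcolon
  -- evaluation killing the RHS
  set v : ℕ × ℕ → K := fun p => if p = (1,4) ∨ p = (2,6) ∨ p = (3,8) then 1 else 0 with hv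
  have hker : (Jkl K 3 3 7 ⊔
        Ideal.span {(MvPolynomial.X (1, 2) : MvPolynomial (ℕ × ℕ) K),
          MvPolynomial.X (1, 3), MvPolynomial.X (2, 5)}) ≤ RingHom.ker (eval v) := by
    apply sup_le
    · rw [Jkl, Ideal.span_le]
      rintro _ ⟨c, ⟨hinc, hk, hl⟩, rfl⟩
      have h3 : c 3 ≤ 7 := hl
      simp only [SetLike.mem_coe, RingHom.mem_ker, diagMon3, map_mul, eval_X]
      have : v (3, c 3) = 0 := by
        rw [hv]
        simp only [Prod.mk.injEq]
        norm_num
        omega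
      rw [this, mul_zero]
    · rw [Ideal.span_le]
      rintro x hx
      simp only [Set.mem_insert_iff, Set.mem_singleton_iff] at hx
      rcases hx with rfl | rfl | rfl <;>
        · simp only [SetLike.mem_coe, RingHom.mem_ker, eval_X, hv]
          norm_num
  have := hker hgcolon
  rw [RingHom.mem_ker] at this
  simp only [hg, map_mul, eval_X, hv] at this
  norm_num at this
end
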